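/- Let $X$ be a finite-dimensional real Banach space and $U: X+iX \to \mathbb{R}$ a twice differentiable plurisubharmonic function. Then for any $z_0 \in X+iX$, any $x, y \in X$ and any $\lambda \in [-1,1]$: $\frac{\partial^2 U(z_0)}{\partial x^2} + \frac{\partial^2 U(z_0)}{\partial y^2} + 2\lambda\left(\frac{\partial^2 U(z_0)}{\partial x\, \partial (iy)} - \frac{\partial^2 U(z_0)}{\partial y\, \partial (ix)}\right) + \lambda^2\left(\frac{\partial^2 U(z_0)}{\partial (ix)^2} + \frac{\partial^2 U(z_0)}{\partial (iy)^2}\right) \geq 0$, provided additionally $v \mapsto U(u + iv)$ is concave in $v$ for each fixed $u \in X$. -/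

import Mathlib

open Set

variable {X : Type*} [NormedAddCommGroup X] [NormedSpace ℝ X]

/-- Second directional derivative of `U` at `p` in directions `a`, `b`. -/
noncomputable def secondDirDeriv (U : X → ℝ) (p a b : X) : ℝ :=
  fderiv ℝ (fun y => fderiv ℝ U y a) p b

/-- Multiplication by `i` on the complexification `X + iX ≃ X × X`. -/
def Jmap (p : X × X) : X × X := (-p.2, p.1)

/-!
Let `B` be the Hessian of `U` at `z₀` and `Q v = B v v`. In terms of `B`, the left-hand side is
a quadratic polynomial `a + 2λb + λ²c` in `λ`. Its values at `λ = 1` and `λ = -1` are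
`Q v + Q (i v)` for `v = x + iy` and `v = x - iy`, which are nonnegative by plurisubharmonicity,
and its leading coefficient `c = Q (ix) + Q (iy)` is nonpositive by concavity in the imaginary
directions. A concave quadratic that is nonnegative at `±1` is nonnegative on `[-1, 1]`.
-/

section Calculus

variable {E : Type*} [NormedAddCommGroup E] [NormedSpace ℝ E]

theorem secondDirDeriv_eq_fderiv_fderiv_apply {U : E → ℝ} {p : E} (hU : ContDiffAt ℝ 2 U p)
    (a b : E) : secondDirDeriv U p a b = fderiv ℝ (fderiv ℝ U) p a b := by
  have hd : DifferentiableAt ℝ (fderiv ℝ U) p :=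
    (hU.fderiv_right (m := 1) (by norm_num)).differentiableAt one_ne_zero
  have hsymm : fderiv ℝ (fderiv ℝ U) p b a = fderiv ℝ (fderiv ℝ U) p a b :=
    hU.isSymmSndFDerivAt (by simp [minSmoothness_of_isRCLikeNormedField]) b a
  rw [secondDirDeriv, (hd.hasFDerivAt.clm_apply (hasFDerivAt_const a p)).fderiv]
  simpa using hsymm

theorem fderiv_fderiv_apply_self_nonpos_of_concaveOn {U : E → ℝ} {z v : E}
    (hU : Differentiable ℝ U) (hU' : DifferentiableAt ℝ (fderiv ℝ U) z)
    (hconc : ConcaveOn ℝ univ (fun t : ℝ => U (z + t • v))) :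
    fderiv ℝ (fderiv ℝ U) z v v ≤ 0 := by
  have hline : ∀ t : ℝ, HasDerivAt (fun s : ℝ => z + s • v) v t := fun t => by
    simpa using ((hasDerivAt_id t).smul_const v).const_add z
  have hderiv : ∀ t, HasDerivAt (fun s : ℝ => U (z + s • v)) (fderiv ℝ U (z + t • v) v) t :=
    fun t => (hU _).hasFDerivAt.comp_hasDerivAt t (hline t)
  have hanti : Antitone fun t : ℝ => fderiv ℝ U (z + t • v) v := fun s t hst => by
    simpa only [(hderiv _).deriv] using
      hconc.antitoneOn_deriv (fun t _ => (hderiv t).differentiableAt) trivial trivial hst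
  have hU'' : HasDerivAt (fun t : ℝ => fderiv ℝ U (z + t • v)) (fderiv ℝ (fderiv ℝ U) z v) 0 :=
    hU'.hasFDerivAt.comp_hasDerivAt_of_eq 0 (hline 0) (by simp)
  simpa using (hU''.clm_apply (hasDerivAt_const 0 v)).nonpos_of_antitone hanti

end Calculus

theorem ConcaveOn.comp_line {E : Type*} [AddCommGroup E] [Module ℝ E] {f : E → ℝ}
    (hf : ConcaveOn ℝ univ f) (a v : E) : ConcaveOn ℝ univ (fun t : ℝ => f (a + t • v)) := by
  simpa [Function.comp_def, AffineMap.lineMap_apply_module', add_comm] using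
    hf.comp_affineMap (AffineMap.lineMap a (a + v))

theorem ContinuousLinearMap.apply_self_add_apply_Jmap_self
    (B : X × X →L[ℝ] X × X →L[ℝ] ℝ) (hB : ∀ u v, B u v = B v u) (x y : X) :
    B (x, y) (x, y) + B (Jmap (x, y)) (Jmap (x, y)) =
      B (x, 0) (x, 0) + B (y, 0) (y, 0) + 2 * (B (x, 0) (0, y) - B (y, 0) (0, x)) +
        (B (0, x) (0, x) + B (0, y) (0, y)) := by
  have hv : ((x, y) : X × X) = (x, 0) + (0, y) := by simp
  have hJv : Jmap ((x, y) : X × X) = -(y, 0) + (0, x) := by simp [Jmap]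
  rw [hJv, hv]
  simp only [map_add, map_neg, add_apply, neg_apply]
  rw [hB (0, y) (x, 0), hB (0, x) (y, 0)]
  ring

theorem ContinuousLinearMap.apply_self_add_apply_Jmap_self_neg_snd
    (B : X × X →L[ℝ] X × X →L[ℝ] ℝ) (hB : ∀ u v, B u v = B v u) (x y : X) :
    B (x, -y) (x, -y) + B (Jmap (x, -y)) (Jmap (x, -y)) =
      B (x, 0) (x, 0) + B (y, 0) (y, 0) - 2 * (B (x, 0) (0, y) - B (y, 0) (0, x)) +
        (B (0, x) (0, x) + B (0, y) (0, y)) := by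
  have hneg₁ : ((-y, 0) : X × X) = -(y, 0) := by simp
  have hneg₂ : ((0, -y) : X × X) = -(0, y) := by simp
  rw [B.apply_self_add_apply_Jmap_self hB, hneg₁, hneg₂]
  simp only [map_neg, neg_apply, neg_neg]
  ring

theorem quadratic_nonneg_of_nonneg_at_one_of_nonneg_at_neg_one {a b c t : ℝ}
    (h₁ : 0 ≤ a + 2 * b + c) (h₂ : 0 ≤ a - 2 * b + c) (hc : c ≤ 0) (ht : t ∈ Icc (-1 : ℝ) 1) :
    0 ≤ a + 2 * t * b + t ^ 2 * c := by
  obtain ⟨ht₁, ht₂⟩ := ht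
  nlinarith [mul_nonneg (by linarith : 0 ≤ 1 + t) h₁, mul_nonneg (by linarith : 0 ≤ 1 - t) h₂,
    mul_nonneg (by nlinarith : 0 ≤ 1 - t ^ 2) (neg_nonneg.2 hc)]

theorem plurisubharmonic_second_deriv_ineq_general
    (U : X × X → ℝ) (hU : ContDiff ℝ 2 U)
    (hpsh : ∀ w v : X × X,
      0 ≤ secondDirDeriv U w v v + secondDirDeriv U w (Jmap v) (Jmap v))
    (hconc : ∀ u : X, ConcaveOn ℝ univ (fun v : X => U (u, v))) :
    ∀ (z₀ : X × X) (x y : X) (lam : ℝ), lam ∈ Icc (-1 : ℝ) 1 →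
      0 ≤ secondDirDeriv U z₀ ((x, 0) : X × X) ((x, 0) : X × X) +
          secondDirDeriv U z₀ ((y, 0) : X × X) ((y, 0) : X × X) +
          2 * lam * (secondDirDeriv U z₀ ((x, 0) : X × X) ((0, y) : X × X) -
            secondDirDeriv U z₀ ((y, 0) : X × X) ((0, x) : X × X)) +
          lam ^ 2 * (secondDirDeriv U z₀ ((0, x) : X × X) ((0, x) : X × X) +
            secondDirDeriv U z₀ ((0, y) : X × X) ((0, y) : X × X)) := by
  intro z₀ x y lam hlam
  set B := fderiv ℝ (fderiv ℝ U) z₀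
  have hB : ∀ a b, secondDirDeriv U z₀ a b = B a b :=
    secondDirDeriv_eq_fderiv_fderiv_apply hU.contDiffAt
  have hsymm : ∀ u v, B u v = B v u :=
    hU.contDiffAt.isSymmSndFDerivAt (by simp [minSmoothness_of_isRCLikeNormedField])
  have himag : ∀ u : X, B (0, u) (0, u) ≤ 0 := fun u => by
    refine fderiv_fderiv_apply_self_nonpos_of_concaveOn (hU.differentiable (by norm_num))
      ((hU.fderiv_right (m := 1) (by norm_num)).differentiable one_ne_zero z₀) ?_
    have hline : ∀ t : ℝ, z₀ + t • ((0, u) : X × X) = (z₀.1, z₀.2 + t • u) := fun t => by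
      ext <;> simp
    simpa only [hline] using (hconc z₀.1).comp_line z₀.2 u
  simp only [hB]
  refine quadratic_nonneg_of_nonneg_at_one_of_nonneg_at_neg_one ?_ ?_
    (add_nonpos (himag x) (himag y)) hlam
  · simpa only [hB, B.apply_self_add_apply_Jmap_self hsymm] using hpsh z₀ (x, y)
  · simpa only [hB, B.apply_self_add_apply_Jmap_self_neg_snd hsymm] using hpsh z₀ (x, -y)

/-- Let `X` be a finite-dimensional real Banach space and
`U : X + iX → ℝ` twice differentiable, plurisubharmonic, and concave in the
imaginary direction. Then for all `z₀`, `x, y ∈ X` and `λ ∈ [-1,1]`: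
`∂²U/∂x² + ∂²U/∂y² + 2λ(∂²U/∂x∂(iy) − ∂²U/∂y∂(ix)) + λ²(∂²U/∂(ix)² + ∂²U/∂(iy)²) ≥ 0`. -/
theorem plurisubharmonic_second_deriv_ineq
    [FiniteDimensional ℝ X] (U : X × X → ℝ) (hU : ContDiff ℝ 2 U)
    (hpsh : ∀ w v : X × X,
      0 ≤ secondDirDeriv U w v v + secondDirDeriv U w (Jmap v) (Jmap v))
    (hconc : ∀ u : X, ConcaveOn ℝ univ (fun v : X => U (u, v))) :
    ∀ (z₀ : X × X) (x y : X) (lam : ℝ), lam ∈ Icc (-1 : ℝ) 1 →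
      0 ≤ secondDirDeriv U z₀ ((x, 0) : X × X) ((x, 0) : X × X) +
          secondDirDeriv U z₀ ((y, 0) : X × X) ((y, 0) : X × X) +
          2 * lam * (secondDirDeriv U z₀ ((x, 0) : X × X) ((0, y) : X × X) -
            secondDirDeriv U z₀ ((y, 0) : X × X) ((0, x) : X × X)) +
          lam ^ 2 * (secondDirDeriv U z₀ ((0, x) : X × X) ((0, x) : X × X) +
            secondDirDeriv U z₀ ((0, y) : X × X) ((0, y) : X × X)) :=
  plurisubharmonic_second_deriv_ineq_general U hU hpsh hconc
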